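/- Transparent channel properties: let C₁ : X×Y₁ → ℝ be a channel, T a transparent channel compatible with C₁, and p ∈ [0,1]. Then (i) (C₁ ∥ T) ≡ T; and (ii) (C₁ ⊞_p T) ⊑ C₁. -/

import Mathlib

/-!
A transparent channel reveals the secret: each of its outputs `y` determines the only input
`d y` that can produce it. Post-processing `T` by `y ↦ C (d y)` therefore simulates any channel
`C`, so `T` refines everything. This gives `T ⊑ C₁ ∥ T`, while the projection gives
`C₁ ∥ T ⊑ T`; and in `C₁ ⊞_p T` the `T`-branch can be turned into `C₁` the same way.
-/

open Finset

/-- A channel with input set `X` and output set `Y`: entries are nonnegative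
and each row sums to `1`. -/
def IsChannel {X Y : Type*} [Fintype Y] (C : X → Y → ℝ) : Prop :=
  (∀ x y, 0 ≤ C x y) ∧ ∀ x, ∑ y, C x y = 1

/-- A channel with input set `X` whose output set is the finset `S` of a common
ambient type `Ω`: entries are nonnegative, each row sums to `1` over `S`, and
entries vanish outside `S`. -/
def IsChannelOn {X Ω : Type*} (S : Finset Ω) (C : X → Ω → ℝ) : Prop :=
  (∀ x y, 0 ≤ C x y) ∧ (∀ x, ∑ y ∈ S, C x y = 1) ∧ ∀ x y, y ∉ S → C x y = 0

/-- Parallel composition `C₁ ∥ C₂`. -/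
def par {X Y₁ Y₂ : Type*} (C₁ : X → Y₁ → ℝ) (C₂ : X → Y₂ → ℝ) : X → Y₁ × Y₂ → ℝ :=
  fun x y => C₁ x y.1 * C₂ x y.2

/-- Visible choice `C₁ ⊞_p C₂`, on the disjoint union of the output sets. -/
def vis {X Y₁ Y₂ : Type*} (p : ℝ) (C₁ : X → Y₁ → ℝ) (C₂ : X → Y₂ → ℝ) : X → Y₁ ⊕ Y₂ → ℝ :=
  fun x => Sum.elim (fun y => p * C₁ x y) (fun y => (1 - p) * C₂ x y)

/-- Hidden choice `C₁ ⊕_p C₂` for channels whose output sets lie in a common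
ambient type (pointwise convex combination; this agrees with the case analysis
on `Y₁ ∩ Y₂`, `Y₁ \ Y₂`, `Y₂ \ Y₁` since channels vanish outside their output sets). -/
def hid {X Ω : Type*} (p : ℝ) (C₁ C₂ : X → Ω → ℝ) : X → Ω → ℝ :=
  fun x y => p * C₁ x y + (1 - p) * C₂ x y

/-- Equality up to a permutation of the output set, `C₁ ≐ C₂`. -/
def PermEq {X Y₁ Y₂ : Type*} (C₁ : X → Y₁ → ℝ) (C₂ : X → Y₂ → ℝ) : Prop :=
  ∃ ψ : Y₁ ≃ Y₂, ∀ x y, C₁ x y = C₂ x (ψ y)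

/-- Cascading `CD` of channels. -/
def cascade {X Y Z : Type*} [Fintype Y] (C : X → Y → ℝ) (D : Y → Z → ℝ) : X → Z → ℝ :=
  fun x z => ∑ y, C x y * D y z

/-- `Refines C₁ C₂` (written `C₁ ⊑ C₂`): there is a channel `D` with `C₁D = C₂`. -/
def Refines {X Y₁ Y₂ : Type*} [Fintype Y₁] [Fintype Y₂] (C₁ : X → Y₁ → ℝ)
    (C₂ : X → Y₂ → ℝ) : Prop :=
  ∃ D : Y₁ → Y₂ → ℝ, IsChannel D ∧ cascade C₁ D = C₂

/-- Equivalence of channels: mutual refinement. -/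
def EquivCh {X Y₁ Y₂ : Type*} [Fintype Y₁] [Fintype Y₂] (C₁ : X → Y₁ → ℝ)
    (C₂ : X → Y₂ → ℝ) : Prop :=
  Refines C₁ C₂ ∧ Refines C₂ C₁

/-- A prior: a probability distribution on the finite input set `X`. -/
def IsPrior {X : Type*} [Fintype X] (π : X → ℝ) : Prop :=
  (∀ x, 0 ≤ π x) ∧ ∑ x, π x = 1

/-- A gain function `g : W × X → [0,1]`. -/
def IsGain {W X : Type*} (g : W → X → ℝ) : Prop :=
  ∀ w x, 0 ≤ g w x ∧ g w x ≤ 1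

/-- Posterior g-vulnerability `V_g[π, C]`. -/
noncomputable def postV {W X Y : Type*} [Fintype W] [Nonempty W] [Fintype X] [Fintype Y]
    (π : X → ℝ) (g : W → X → ℝ) (C : X → Y → ℝ) : ℝ :=
  ∑ y, univ.sup' univ_nonempty fun w => ∑ x, C x y * π x * g w x

section

variable {X Y Z : Type*}

def IsTransparent (T : X → Y → ℝ) : Prop :=
  ∀ y x x', 0 < T x y → 0 < T x' y → x = x'

lemma isChannel_deterministic [Fintype Z] [DecidableEq Z] (f : Y → Z) :
    IsChannel fun y z => if z = f y then (1 : ℝ) else 0 :=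
  ⟨fun _ _ => by dsimp only; split_ifs <;> norm_num, fun _ => by simp⟩

lemma IsChannel.par [Fintype Y] [Fintype Z] {C₁ : X → Y → ℝ} {C₂ : X → Z → ℝ}
    (h₁ : IsChannel C₁) (h₂ : IsChannel C₂) : IsChannel (par C₁ C₂) :=
  ⟨fun _ _ => mul_nonneg (h₁.1 _ _) (h₂.1 _ _), fun x => by
    simp only [_root_.par, Fintype.sum_prod_type, ← Finset.mul_sum, h₂.2, mul_one, h₁.2]⟩

lemma IsChannel.sumElim {W : Type*} [Fintype W] {D₁ : Y → W → ℝ} {D₂ : Z → W → ℝ}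
    (h₁ : IsChannel D₁) (h₂ : IsChannel D₂) : IsChannel (Sum.elim D₁ D₂) :=
  ⟨fun u => u.rec h₁.1 h₂.1, fun u => u.rec h₁.2 h₂.2⟩

lemma refines_par_right [Fintype Y] [Fintype Z] {C₁ : X → Y → ℝ} {C₂ : X → Z → ℝ}
    (h₁ : IsChannel C₁) : Refines (par C₁ C₂) C₂ := by
  classical
  refine ⟨fun u z => if z = u.2 then 1 else 0, isChannel_deterministic Prod.snd, ?_⟩
  funext x z
  simp [cascade, par, Fintype.sum_prod_type, ← Finset.sum_mul, h₁.2]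

lemma Refines.vis_left [Fintype Y] [Fintype Z] {C₁ : X → Y → ℝ} {C₂ : X → Z → ℝ}
    (h : Refines C₂ C₁) (p : ℝ) : Refines (vis p C₁ C₂) C₁ := by
  classical
  obtain ⟨E, hE, hC₂E⟩ := h
  refine ⟨Sum.elim (fun y y' => if y' = y then 1 else 0) E,
    (isChannel_deterministic id).sumElim hE, ?_⟩
  funext x y
  have hsim : ∑ z, C₂ x z * E z y = C₁ x y := congrFun (congrFun hC₂E x) y
  simp only [cascade, vis, Fintype.sum_sum_type, Sum.elim_inl, Sum.elim_inr, mul_ite, mul_one,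
    mul_zero, Finset.sum_ite_eq, Finset.mem_univ, if_true, mul_assoc, ← Finset.mul_sum, hsim]
  ring

lemma IsTransparent.exists_decoder [Nonempty X] {T : X → Y → ℝ} (hT : IsTransparent T) :
    ∃ d : Y → X, ∀ x y, 0 < T x y → d y = x := by
  classical
  refine ⟨fun y => if h : ∃ x, 0 < T x y then h.choose else Classical.arbitrary X,
    fun x y hxy => ?_⟩
  have hex : ∃ x, 0 < T x y := ⟨x, hxy⟩
  simpa [dif_pos hex] using hT y _ x hex.choose_spec hxy

lemma IsTransparent.refines [Nonempty X] [Fintype Y] [Fintype Z] {T : X → Y → ℝ}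
    {C : X → Z → ℝ} (hT : IsTransparent T) (hTc : IsChannel T) (hC : IsChannel C) :
    Refines T C := by
  obtain ⟨d, hd⟩ := hT.exists_decoder
  refine ⟨fun y => C (d y), ⟨fun _ _ => hC.1 _ _, fun _ => hC.2 _⟩, ?_⟩
  funext x z
  have hdecode : ∀ y, T x y * C (d y) z = T x y * C x z := fun y => by
    rcases (hTc.1 x y).lt_or_eq with hpos | hzero
    · rw [hd x y hpos]
    · rw [← hzero, zero_mul, zero_mul]
  simp only [cascade, hdecode, ← Finset.sum_mul, hTc.2, one_mul]

end

theorem transparent_channel_properties_general {X Y₁ YT : Type*} [Nonempty X]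
    [Fintype Y₁] [Fintype YT]
    (C₁ : X → Y₁ → ℝ) (T : X → YT → ℝ)
    (h₁ : IsChannel C₁) (hT : IsChannel T)
    (htrans : ∀ y x x', 0 < T x y → 0 < T x' y → x = x')
    (p : ℝ) :
    EquivCh (par C₁ T) T ∧ Refines (vis p C₁ T) C₁ :=
  ⟨⟨refines_par_right h₁, IsTransparent.refines htrans hT (h₁.par hT)⟩,
    (IsTransparent.refines htrans hT h₁).vis_left p⟩

/-- Transparent channel properties (Proposition: Null and Transparent Channel
Properties, transparent-channel part). -/
theorem transparent_channel_properties {X Y₁ YT : Type*} [Nonempty X]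
    [Fintype Y₁] [Fintype YT]
    (C₁ : X → Y₁ → ℝ) (T : X → YT → ℝ)
    (h₁ : IsChannel C₁) (hT : IsChannel T)
    (htrans : ∀ y x x', 0 < T x y → 0 < T x' y → x = x')
    (p : ℝ) (hp : p ∈ Set.Icc (0:ℝ) 1) :
    EquivCh (par C₁ T) T ∧ Refines (vis p C₁ T) C₁ :=
  transparent_channel_properties_general C₁ T h₁ hT htrans p
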